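/- On {0,1}^n, the identities (2x_r − 1)² = 1 and (2x_r − 1)·x_r = x_r hold for every coordinate, and consequently, with G(x) := F(x) + Σ_{i=1}^{⌊n/2⌋} x_i(x_{2i} − 1) − (1/2)Σ_{i=1}^n x_i, one has ∂_r G(x) = (2x_r − 1)·{ Σ_{i=1}^n x_i + Σ_{i=1}^{n−r} x_i − (n − ⌊r/2⌋) − (1/2)χ(r ≤ n/2) } − (1/2)χ(r ≤ n/2) − 1/2 for all 1 ≤ r ≤ n. -/

import Mathlib

open Finset

/-- The monochromatic-Schur-triple counting polynomial. -/
noncomputable def F (n : ℕ) (x : ℕ → ℝ) : ℝ :=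
  ∑ p ∈ (Finset.Icc 1 n ×ˢ Finset.Icc 1 n).filter
      (fun p => p.1 < p.2 ∧ p.1 + p.2 ≤ n),
    (x p.1 * x p.2 * x (p.1 + p.2)
      + (1 - x p.1) * (1 - x p.2) * (1 - x (p.1 + p.2)))

/-- The O(n)-modified function G. -/
noncomputable def G (n : ℕ) (x : ℕ → ℝ) : ℝ :=
  F n x + ∑ i ∈ Finset.Icc 1 (n / 2), x i * (x (2 * i) - 1)
    - (1 / 2) * ∑ i ∈ Finset.Icc 1 n, x i

/-- Indicator function. -/
noncomputable def chi (P : Prop) [Decidable P] : ℝ := if P then 1 else 0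

/-! Flipping `x r` changes the summand of `F` at a Schur triple `{i, j, i + j}` only if `r` is a
member, and then by `(2 x_r - 1) (y_a + y_b)`, where `a, b` are the other two members and
`y = x - 1/2`. The triples through `r` are `{m, r, m + r}` with `1 ≤ m ≤ n - r`, `m ≠ r`, and
`{i, r - i, r}` with `2 i < r`; summing `y` over their other members gives
`∑_{i ≤ n} y_i + ∑_{i ≤ n - r} y_i` up to corrections at `r`, `2 r` and `r / 2`. The term
`∑ x_i (x_{2i} - 1)` of `G` cancels those at `2 r` and `r / 2`, and for Boolean `x_r` the identity
`(2 x_r - 1) (x_r - 1/2) = 1/2` turns the rest into constants. -/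

def flipAt (x : ℕ → ℝ) (r : ℕ) : ℕ → ℝ := Function.update x r (1 - x r)

@[simp] lemma flipAt_self (x : ℕ → ℝ) (r : ℕ) : flipAt x r r = 1 - x r :=
  Function.update_self _ _ _

@[simp] lemma flipAt_of_ne (x : ℕ → ℝ) {r i : ℕ} (h : i ≠ r) : flipAt x r i = x i :=
  Function.update_of_ne h _ _

section PairingSums

variable {M : Type*} [AddCommGroup M]

lemma sum_Ico_filter_add_reflect (f : ℕ → M) {r : ℕ} (hr : 1 ≤ r) :
    ∑ i ∈ (Ico 1 r).filter (fun i => 2 * i < r), (f i + f (r - i))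
      = ∑ i ∈ Ico 1 r, f i - if Even r then f (r / 2) else 0 := by
  have hreflect : ∑ i ∈ (Ico 1 r).filter (fun i => 2 * i < r), f (r - i)
      = ∑ i ∈ (Ico 1 r).filter (fun i => r < 2 * i), f i :=
    sum_nbij' (r - ·) (r - ·) (by simp; omega) (by simp; omega) (by simp; omega)
      (by simp; omega) (fun _ _ => rfl)
  have hmiddle : ∑ i ∈ (Ico 1 r).filter (fun i => 2 * i = r), f i
      = if Even r then f (r / 2) else 0 := by
    split_ifs with hev
    · obtain ⟨k, rfl⟩ := hev
      rw [show (Ico 1 (k + k)).filter (fun i => 2 * i = k + k) = {k} by ext; simp; omega]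
      simp [← two_mul]
    · refine sum_eq_zero fun i hi => absurd ⟨i, ?_⟩ hev
      simp at hi
      omega
  rw [sum_add_distrib, hreflect, ← hmiddle, eq_sub_iff_add_eq]
  simp only [sum_filter, ← sum_add_distrib]
  refine sum_congr rfl fun i _ => ?_
  split_ifs <;> first | omega | simp

lemma sum_schurPartners (f : ℕ → M) {n r : ℕ} (hr : 1 ≤ r) (hrn : r ≤ n) :
    ∑ m ∈ (Icc 1 (n - r)).erase r, (f m + f (m + r))
        + ∑ i ∈ (Ico 1 r).filter (fun i => 2 * i < r), (f i + f (r - i))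
      = ∑ i ∈ Icc 1 n, f i + ∑ i ∈ Icc 1 (n - r), f i - f r
        - (if 2 * r ≤ n then f r + f (2 * r) else 0) - (if Even r then f (r / 2) else 0) := by
  have herase : ∑ m ∈ (Icc 1 (n - r)).erase r, (f m + f (m + r))
      = ∑ m ∈ Icc 1 (n - r), (f m + f (m + r)) - if 2 * r ≤ n then f r + f (2 * r) else 0 := by
    split_ifs with h
    · rw [sum_erase_eq_sub (by simp; omega), two_mul]
    · rw [erase_eq_of_notMem (by simp; omega), sub_zero]
  have hshift : ∑ m ∈ Icc 1 (n - r), f (m + r) = ∑ i ∈ Ico (r + 1) (n + 1), f i := by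
    rw [← Ico_add_one_right_eq_Icc, sum_Ico_add', show 1 + r = r + 1 by omega,
      show n - r + 1 + r = n + 1 by omega]
  have hsplit : ∑ i ∈ Icc 1 n, f i = ∑ i ∈ Ico 1 r, f i + (f r + ∑ i ∈ Ico (r + 1) (n + 1), f i) := by
    rw [← Ico_add_one_right_eq_Icc, ← sum_Ico_consecutive f hr (by omega : r ≤ n + 1),
      sum_eq_sum_Ico_succ_bot (by omega : r < n + 1)]
  rw [herase, sum_add_distrib, hshift, sum_Ico_filter_add_reflect f hr, hsplit]
  abel

end PairingSums

def schurPairs (n : ℕ) : Finset (ℕ × ℕ) :=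
  (Icc 1 n ×ˢ Icc 1 n).filter (fun p => p.1 < p.2 ∧ p.1 + p.2 ≤ n)

section SchurPairs

variable {M : Type*} [AddCommMonoid M]

lemma sum_schurPairs_filter_summand_eq (g : ℕ × ℕ → M) {n r : ℕ} (hr : 1 ≤ r) :
    ∑ p ∈ (schurPairs n).filter (fun p => p.1 = r ∨ p.2 = r), g p
      = ∑ m ∈ (Icc 1 (n - r)).erase r, g (min m r, max m r) :=
  sum_nbij' (fun p => p.1 + p.2 - r) (fun m => (min m r, max m r))
    (by simp [schurPairs]; omega) (by simp [schurPairs]; omega)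
    (by simp [schurPairs, Prod.ext_iff]; omega) (by simp)
    (fun p hp => by simp [schurPairs] at hp; congr 1; simp [Prod.ext_iff]; omega)

lemma sum_schurPairs_filter_add_eq (g : ℕ × ℕ → M) {n r : ℕ} (hrn : r ≤ n) :
    ∑ p ∈ (schurPairs n).filter (fun p => p.1 + p.2 = r), g p
      = ∑ i ∈ (Ico 1 r).filter (fun i => 2 * i < r), g (i, r - i) :=
  sum_nbij' Prod.fst (fun i => (i, r - i))
    (by simp [schurPairs]; omega) (by simp [schurPairs]; omega)
    (by simp [schurPairs, Prod.ext_iff]; omega) (by simp)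
    (fun p hp => by simp [schurPairs] at hp; congr 1; simp [Prod.ext_iff]; omega)

end SchurPairs

def schurSummand (x : ℕ → ℝ) (p : ℕ × ℕ) : ℝ :=
  x p.1 * x p.2 * x (p.1 + p.2) + (1 - x p.1) * (1 - x p.2) * (1 - x (p.1 + p.2))

lemma F_eq_sum_schurSummand (n : ℕ) (x : ℕ → ℝ) :
    F n x = ∑ p ∈ schurPairs n, schurSummand x p := rfl

lemma schurSummand_flipAt_of_ne (x : ℕ → ℝ) {r : ℕ} {p : ℕ × ℕ} (h1 : p.1 ≠ r) (h2 : p.2 ≠ r)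
    (h3 : p.1 + p.2 ≠ r) : schurSummand (flipAt x r) p = schurSummand x p := by
  simp [schurSummand, h1, h2, h3]

lemma schurSummand_sub_flipAt_partner (x : ℕ → ℝ) {m r : ℕ} (hm : 1 ≤ m) (hmr : m ≠ r) :
    schurSummand x (min m r, max m r) - schurSummand (flipAt x r) (min m r, max m r)
      = (2 * x r - 1) * ((x m - 1 / 2) + (x (m + r) - 1 / 2)) := by
  have hmr' : m + r ≠ r := by omega
  rcases hmr.lt_or_gt with h | h
  · rw [min_eq_left h.le, max_eq_right h.le]
    simp only [schurSummand, flipAt_self, flipAt_of_ne x hmr, flipAt_of_ne x hmr']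
    ring
  · rw [min_eq_right h.le, max_eq_left h.le]
    simp only [schurSummand, add_comm r m, flipAt_self, flipAt_of_ne x hmr, flipAt_of_ne x hmr']
    ring

lemma schurSummand_sub_flipAt_summands (x : ℕ → ℝ) {i r : ℕ} (hi : 1 ≤ i) (hir : 2 * i < r) :
    schurSummand x (i, r - i) - schurSummand (flipAt x r) (i, r - i)
      = (2 * x r - 1) * ((x i - 1 / 2) + (x (r - i) - 1 / 2)) := by
  have hsum : i + (r - i) = r := by omega
  simp only [schurSummand, hsum, flipAt_self, flipAt_of_ne x (show i ≠ r by omega),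
    flipAt_of_ne x (show r - i ≠ r by omega)]
  ring

lemma F_sub_F_flipAt (x : ℕ → ℝ) {n r : ℕ} (hr : 1 ≤ r) (hrn : r ≤ n) :
    F n x - F n (flipAt x r) = (2 * x r - 1) *
      (∑ m ∈ (Icc 1 (n - r)).erase r, ((x m - 1 / 2) + (x (m + r) - 1 / 2))
        + ∑ i ∈ (Ico 1 r).filter (fun i => 2 * i < r), ((x i - 1 / 2) + (x (r - i) - 1 / 2))) := by
  have hsupport : ∑ p ∈ schurPairs n, (schurSummand x p - schurSummand (flipAt x r) p)
      = ∑ p ∈ (schurPairs n).filter (fun p => (p.1 = r ∨ p.2 = r) ∨ p.1 + p.2 = r),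
          (schurSummand x p - schurSummand (flipAt x r) p) := by
    refine (sum_filter_of_ne fun p _ hp => ?_).symm
    by_contra! h
    exact hp (sub_eq_zero.2 (schurSummand_flipAt_of_ne x h.1.1 h.1.2 h.2).symm)
  have hdisjoint : Disjoint ((schurPairs n).filter (fun p => p.1 = r ∨ p.2 = r))
      ((schurPairs n).filter (fun p => p.1 + p.2 = r)) :=
    disjoint_filter.2 fun p hp => by simp [schurPairs] at hp; omega
  rw [F_eq_sum_schurSummand, F_eq_sum_schurSummand, ← sum_sub_distrib, hsupport, filter_or,
    sum_union hdisjoint, sum_schurPairs_filter_summand_eq _ hr, sum_schurPairs_filter_add_eq _ hrn,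
    mul_add, mul_sum, mul_sum]
  congr 1
  · exact sum_congr rfl fun m hm => by
      simp only [mem_erase, mem_Icc] at hm
      exact schurSummand_sub_flipAt_partner x (by omega) hm.1
  · exact sum_congr rfl fun i hi => by
      simp only [mem_filter, mem_Ico] at hi
      exact schurSummand_sub_flipAt_summands x hi.1.1 hi.2

lemma sum_mul_sub_one_sub_flipAt (x : ℕ → ℝ) {n r : ℕ} (hr : 1 ≤ r) (hrn : r ≤ n) :
    ∑ i ∈ Icc 1 (n / 2), x i * (x (2 * i) - 1)
        - ∑ i ∈ Icc 1 (n / 2), flipAt x r i * (flipAt x r (2 * i) - 1)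
      = (2 * x r - 1) *
          ((if 2 * r ≤ n then x (2 * r) - 1 else 0) + (if Even r then x (r / 2) else 0)) := by
  have hterm : ∀ i, 1 ≤ i → x i * (x (2 * i) - 1) - flipAt x r i * (flipAt x r (2 * i) - 1)
      = (2 * x r - 1) * ((if i = r then x (2 * r) - 1 else 0) + (if 2 * i = r then x i else 0)) := by
    intro i hi
    by_cases hir : i = r
    · subst hir
      have h2i : 2 * i ≠ i := by omega
      rw [flipAt_self, flipAt_of_ne x h2i, if_pos rfl, if_neg h2i]
      ring
    by_cases h2ir : 2 * i = r
    · subst h2ir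
      rw [flipAt_self, flipAt_of_ne x hir, if_neg hir, if_pos rfl]
      ring
    · simp [hir, h2ir]
  rw [← sum_sub_distrib, sum_congr rfl fun i hi => hterm i (mem_Icc.1 hi).1, ← mul_sum,
    sum_add_distrib, sum_ite_eq']
  simp_rw [show r ∈ Icc 1 (n / 2) ↔ 2 * r ≤ n by simp; omega]
  congr 2
  split_ifs with hev
  · obtain ⟨k, rfl⟩ := hev
    simp_rw [show ∀ i, 2 * i = k + k ↔ i = k by omega]
    rw [sum_ite_eq', if_pos (by simp; omega)]
    simp [← two_mul]
  · exact sum_eq_zero fun i _ => if_neg fun h => hev ⟨i, by omega⟩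

lemma sum_sub_sum_flipAt (x : ℕ → ℝ) {n r : ℕ} (hr : 1 ≤ r) (hrn : r ≤ n) :
    ∑ i ∈ Icc 1 n, x i - ∑ i ∈ Icc 1 n, flipAt x r i = 2 * x r - 1 := by
  rw [← sum_sub_distrib, sum_eq_single_of_mem r (by simp; omega) fun i _ hi => by simp [hi]]
  rw [flipAt_self]
  ring

lemma sum_Icc_sub_half (x : ℕ → ℝ) (k : ℕ) :
    ∑ i ∈ Icc 1 k, (x i - 1 / 2) = ∑ i ∈ Icc 1 k, x i - k / 2 := by
  rw [sum_sub_distrib, sum_const, Nat.card_Icc, add_tsub_cancel_right, nsmul_eq_mul]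
  ring

lemma two_mul_cast_div_two {R : Type*} [Ring R] (r : ℕ) :
    2 * ((r / 2 : ℕ) : R) = r - if Even r then 0 else 1 := by
  split_ifs with hev
  · rw [sub_zero, ← Nat.cast_ofNat, ← Nat.cast_mul, Nat.two_mul_div_two_of_even hev]
  · rw [eq_sub_iff_add_eq, ← Nat.cast_ofNat, ← Nat.cast_mul, ← Nat.cast_add_one,
      Nat.two_mul_div_two_add_one_of_odd (Nat.not_even_iff_odd.1 hev)]

lemma G_sub_G (n : ℕ) (x y : ℕ → ℝ) :
    G n x - G n y = (F n x - F n y)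
      + (∑ i ∈ Icc 1 (n / 2), x i * (x (2 * i) - 1) - ∑ i ∈ Icc 1 (n / 2), y i * (y (2 * i) - 1))
      - 1 / 2 * (∑ i ∈ Icc 1 n, x i - ∑ i ∈ Icc 1 n, y i) := by
  simp only [G]
  ring

theorem partial_G (n : ℕ) (x : ℕ → ℝ) (hx : ∀ i, x i = 0 ∨ x i = 1) :
    (∀ r : ℕ, (2 * x r - 1) ^ 2 = 1 ∧ (2 * x r - 1) * x r = x r) ∧
    (∀ r : ℕ, 1 ≤ r → r ≤ n →
      G n x - G n (Function.update x r (1 - x r)) =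
        (2 * x r - 1) *
          ((∑ i ∈ Finset.Icc 1 n, x i) + (∑ i ∈ Finset.Icc 1 (n - r), x i)
            - ((n : ℝ) - ((r / 2 : ℕ) : ℝ)) - (1 / 2) * chi (2 * r ≤ n))
        - (1 / 2) * chi (2 * r ≤ n) - 1 / 2) := by
  refine ⟨fun r => ?_, fun r hr hrn => ?_⟩
  · rcases hx r with h | h <;> rw [h] <;> norm_num
  have hsign : (2 * x r - 1) * (x r - 1 / 2) = 1 / 2 := by
    rcases hx r with h | h <;> rw [h] <;> norm_num
  have hhalf := two_mul_cast_div_two (R := ℝ) r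
  rw [show Function.update x r (1 - x r) = flipAt x r from rfl, G_sub_G, F_sub_F_flipAt x hr hrn,
    sum_schurPartners (fun i => x i - 1 / 2) hr hrn, sum_Icc_sub_half, sum_Icc_sub_half,
    sum_mul_sub_one_sub_flipAt x hr hrn, sum_sub_sum_flipAt x hr hrn, Nat.cast_sub hrn]
  by_cases h2r : 2 * r ≤ n
  · simp only [chi, if_pos h2r]
    split_ifs at hhalf ⊢ <;> linear_combination (-2) * hsign - (2 * x r - 1) / 2 * hhalf
  · simp only [chi, if_neg h2r]
    split_ifs at hhalf ⊢ <;> linear_combination -hsign - (2 * x r - 1) / 2 * hhalf
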